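/- arXiv:1705.02605 — 3 statements merged into one kernel-verified Lean document; each statement's English description precedes it below -/
import Mathlib

section
/- Let F be a number field (viewed inside ℂ), let t = e^{2πi m/n} with 1 ≤ m < n and gcd(m,n) = 1, let k ≥ 1, and set h_k(n) = ∏_{p | k, p | n} p^{v_p(k)}. Fix the k-th root ζ = e^{2πi m/(k n)} of t. Then the union over l = 0, …, k−1 of the fields F(e^{2πi l/k} · ζ) all contain F(e^{2πi/(h_k(n)·n)}), and moreover there exists l₀ ∈ {0,…,k−1} with F(e^{2πi l₀/k} · ζ) = F(e^{2πi/(h_k(n)·n)}). -/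
open Complex

/-- `Hkn k n = ∏_{p | k, p | n} p^{v_p(k)}`. -/
def Hkn (k n : ℕ) : ℕ :=
  ∏ p ∈ k.primeFactors ∩ n.primeFactors, p ^ (k.factorization p)

/-- The subfield of `ℂ` generated by a subfield `F` (containing `ℚ`) and `x`. -/
noncomputable def adjC (F : IntermediateField ℚ ℂ) (x : ℂ) : IntermediateField ℚ ℂ :=
  F ⊔ IntermediateField.adjoin ℚ {x}

/-!
Everything lives in the cyclic group generated by `ζ = e^{2πi/(kn)}`: the candidate roots are
`ζ^(ln+m)`, the target is `ζ^d` with `d = k / h_k(n)`, and `ζ^b ∈ F(ζ^a)` as soon as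
`gcd(a, kn) ∣ b`. Since `ln + m` is prime to `n`, its gcd with `kn` divides the part `d` of `k`
prime to `n`, which gives the inclusions; and because `n` is invertible modulo `d`, some
`l₀ < d` makes `d ∣ l₀n + m`, which gives the reverse inclusion.
-/

theorem pow_mem_powers_pow {M : Type*} [Monoid M] {x : M} {N a b : ℕ} (hx : x ^ N = 1)
    (hab : a.gcd N ∣ b) : x ^ b ∈ Submonoid.powers (x ^ a) := by
  obtain ⟨t, rfl⟩ := hab
  rcases Nat.lt_or_ge (a.gcd N) N with hlt | hge
  · obtain ⟨c, -, hc⟩ := Nat.exists_mul_mod_eq_gcd hlt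
    have hac : a * c ≡ a.gcd N [MOD N] := by
      rw [Nat.ModEq, hc, Nat.mod_eq_of_lt hlt]
    refine ⟨c * t, ?_⟩
    dsimp only
    rw [← pow_mul, ← mul_assoc]
    exact pow_eq_pow_of_modEq (hac.mul_right t) hx
  · obtain rfl | hN := eq_or_ne N 0
    · exact ⟨t, by rw [Nat.gcd_zero_right, pow_mul]⟩
    · rw [le_antisymm (Nat.gcd_le_right _ (Nat.pos_of_ne_zero hN)) hge, pow_mul, hx, one_pow]
      exact one_mem _

theorem pow_mem_adjoin_pow {K L : Type*} [Field K] [Field L] [Algebra K L] {x : L} {N a b : ℕ}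
    (hx : x ^ N = 1) (hab : a.gcd N ∣ b) : x ^ b ∈ IntermediateField.adjoin K {x ^ a} := by
  obtain ⟨c, hc⟩ := pow_mem_powers_pow hx hab
  rw [← hc]
  exact pow_mem (IntermediateField.mem_adjoin_simple_self K _) c

theorem adjC_pow_le_adjC_pow (F : IntermediateField ℚ ℂ) {x : ℂ} {N a b : ℕ} (hx : x ^ N = 1)
    (hab : a.gcd N ∣ b) : adjC F (x ^ b) ≤ adjC F (x ^ a) :=
  sup_le le_sup_left <| IntermediateField.adjoin_simple_le_iff.2 <|
    le_sup_right (a := F) (pow_mem_adjoin_pow hx hab)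

theorem exp_two_pi_I_mul_eq_pow {q : ℂ} {N a : ℕ} (hN : N ≠ 0) (hq : q * N = a) :
    exp (2 * Real.pi * I * q) = exp (2 * Real.pi * I / N) ^ a := by
  rw [← exp_nat_mul, ← hq]
  congr 1
  field_simp

theorem Nat.exists_lt_dvd_mul_add {d n : ℕ} (hd : d ≠ 0) (hnd : n.Coprime d) (m : ℕ) :
    ∃ l < d, d ∣ l * n + m := by
  obtain ⟨l, hl, hmod⟩ := Nat.exists_mul_mod_eq_of_coprime (d - m % d) hnd hd
  refine ⟨l, hl, ?_⟩
  rw [Nat.dvd_iff_mod_eq_zero, Nat.add_mod, mul_comm, hmod, Nat.mod_add_mod,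
    Nat.sub_add_cancel (Nat.mod_lt _ (Nat.pos_of_ne_zero hd)).le, Nat.mod_self]

theorem Hkn_dvd (k n : ℕ) : Hkn k n ∣ k := by
  obtain rfl | hk := eq_or_ne k 0
  · exact dvd_zero _
  conv_rhs => rw [Nat.prod_primeFactors_pow_factorization hk]
  exact Finset.prod_dvd_prod_of_subset _ _ _ Finset.inter_subset_left

section Hkn

variable {k n : ℕ}

theorem div_Hkn_ne_zero (hk : k ≠ 0) : k / Hkn k n ≠ 0 :=
  (Nat.div_pos (Nat.le_of_dvd (Nat.pos_of_ne_zero hk) (Hkn_dvd k n))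
    (Nat.pos_of_ne_zero (ne_zero_of_dvd_ne_zero hk (Hkn_dvd k n)))).ne'

theorem Nat.Coprime.coprime_Hkn {g : ℕ} (h : g.Coprime n) : g.Coprime (Hkn k n) :=
  Nat.Coprime.prod_right fun _ hp =>
    (h.coprime_dvd_right (Nat.dvd_of_mem_primeFactors (Finset.mem_inter.1 hp).2)).pow_right _

theorem coprime_div_Hkn (hk : k ≠ 0) (hn : n ≠ 0) : (k / Hkn k n).Coprime n := by
  refine Nat.coprime_of_dvd fun p hp hpd hpn => ?_
  have hpk : p ∣ k := hpd.trans (Nat.div_dvd_of_dvd (Hkn_dvd k n))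
  have hpH : p ^ k.factorization p ∣ Hkn k n :=
    Finset.dvd_prod_of_mem _ (Finset.mem_inter.2
      ⟨Nat.mem_primeFactors.2 ⟨hp, hpk, hk⟩, Nat.mem_primeFactors.2 ⟨hp, hpn, hn⟩⟩)
  have := mul_dvd_mul hpd hpH
  rw [← pow_succ', Nat.div_mul_cancel (Hkn_dvd k n)] at this
  exact Nat.pow_succ_factorization_not_dvd hk hp this

theorem gcd_mul_dvd_div_Hkn {a : ℕ} (ha : a.Coprime n) : a.gcd (k * n) ∣ k / Hkn k n := by
  have hgn : (a.gcd (k * n)).Coprime n := ha.coprime_dvd_left (Nat.gcd_dvd_left _ _)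
  have hgk : a.gcd (k * n) ∣ k := hgn.dvd_of_dvd_mul_right (Nat.gcd_dvd_right _ _)
  rw [Nat.dvd_div_iff_mul_dvd (Hkn_dvd k n), mul_comm]
  exact hgn.coprime_Hkn.mul_dvd_of_dvd_of_dvd hgk (Hkn_dvd k n)

end Hkn

theorem adjoin_kth_roots_of_root_of_unity_general
    (F : IntermediateField ℚ ℂ)
    (m n k : ℕ) (hmn : m < n) (hcop : Nat.gcd m n = 1) (hk : 1 ≤ k) :
    (∀ l : ℕ, l ≤ k - 1 →
      adjC F (Complex.exp (2 * Real.pi * I * (1 / ((Hkn k n : ℂ) * (n : ℂ))))) ≤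
        adjC F (Complex.exp (2 * Real.pi * I * ((l : ℂ) / (k : ℂ))) *
          Complex.exp (2 * Real.pi * I * ((m : ℂ) / ((k : ℂ) * (n : ℂ)))))) ∧
    (∃ l₀ : ℕ, l₀ ≤ k - 1 ∧
      adjC F (Complex.exp (2 * Real.pi * I * ((l₀ : ℂ) / (k : ℂ))) *
          Complex.exp (2 * Real.pi * I * ((m : ℂ) / ((k : ℂ) * (n : ℂ))))) =
        adjC F (Complex.exp (2 * Real.pi * I * (1 / ((Hkn k n : ℂ) * (n : ℂ)))))) := by
  have hk0 : k ≠ 0 := by omega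
  have hn0 : n ≠ 0 := by omega
  have hkn0 : k * n ≠ 0 := mul_ne_zero hk0 hn0
  set ζ := exp (2 * Real.pi * I / ((k * n : ℕ) : ℂ))
  have hζ : ζ ^ (k * n) = 1 := (isPrimitiveRoot_exp _ hkn0).pow_eq_one
  have hroot (l : ℕ) : exp (2 * Real.pi * I * ((l : ℂ) / k)) *
      exp (2 * Real.pi * I * ((m : ℂ) / (k * n))) = ζ ^ (l * n + m) := by
    rw [pow_add, exp_two_pi_I_mul_eq_pow hkn0 (a := l * n) (by push_cast; field_simp),
      exp_two_pi_I_mul_eq_pow hkn0 (by push_cast; field_simp)]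
  have htarget : exp (2 * Real.pi * I * (1 / ((Hkn k n : ℂ) * n))) = ζ ^ (k / Hkn k n) := by
    have hH : (Hkn k n : ℂ) ≠ 0 := by exact_mod_cast ne_zero_of_dvd_ne_zero hk0 (Hkn_dvd k n)
    refine exp_two_pi_I_mul_eq_pow hkn0 ?_
    rw [Nat.cast_div (Hkn_dvd k n) hH]
    push_cast
    field_simp
  have hincl (l : ℕ) : adjC F (ζ ^ (k / Hkn k n)) ≤ adjC F (ζ ^ (l * n + m)) :=
    adjC_pow_le_adjC_pow F hζ (gcd_mul_dvd_div_Hkn ((Nat.coprime_mul_right_add_left m n l).2 hcop))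
  obtain ⟨l₀, hl₀, hdvd⟩ :=
    Nat.exists_lt_dvd_mul_add (div_Hkn_ne_zero hk0) (coprime_div_Hkn hk0 hn0).symm m
  refine ⟨fun l _ => by rw [hroot, htarget]; exact hincl l, l₀, ?_, ?_⟩
  · have := Nat.div_le_self k (Hkn k n)
    omega
  · rw [hroot, htarget]
    exact le_antisymm (adjC_pow_le_adjC_pow F hζ ((Nat.gcd_dvd_left _ _).trans hdvd)) (hincl l₀)

theorem adjoin_kth_roots_of_root_of_unity
    (F : IntermediateField ℚ ℂ) (hF : FiniteDimensional ℚ F)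
    (m n k : ℕ) (hm : 1 ≤ m) (hmn : m < n) (hcop : Nat.gcd m n = 1) (hk : 1 ≤ k) :
    (∀ l : ℕ, l ≤ k - 1 →
      adjC F (Complex.exp (2 * Real.pi * I * (1 / ((Hkn k n : ℂ) * (n : ℂ))))) ≤
        adjC F (Complex.exp (2 * Real.pi * I * ((l : ℂ) / (k : ℂ))) *
          Complex.exp (2 * Real.pi * I * ((m : ℂ) / ((k : ℂ) * (n : ℂ)))))) ∧
    (∃ l₀ : ℕ, l₀ ≤ k - 1 ∧
      adjC F (Complex.exp (2 * Real.pi * I * ((l₀ : ℂ) / (k : ℂ))) *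
          Complex.exp (2 * Real.pi * I * ((m : ℂ) / ((k : ℂ) * (n : ℂ))))) =
        adjC F (Complex.exp (2 * Real.pi * I * (1 / ((Hkn k n : ℂ) * (n : ℂ)))))) :=
  adjoin_kth_roots_of_root_of_unity_general F m n k hmn hcop hk
end

section
/- Let L be a number field, O_L its ring of integers, and u₁, …, u_v a system of fundamental units of O_L. Let t be a unit of O_L written as t = ζ · u₁^{a₁} ⋯ u_v^{a_v} with ζ a root of unity and a₁, …, a_v integers, not all zero (so t is not a root of unity). Let k be a prime number not dividing gcd(|a₁|, …, |a_v|). Then the polynomial T^k − t is irreducible over L. -/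
open NumberField Polynomial

/-- `u : Fin v → (𝓞 L)ˣ` is a system of fundamental units of `𝓞 L`: every unit of `𝓞 L`
is uniquely a root of unity times a product of integer powers of the `u i`. -/
def IsFundamentalSystem {L : Type} [Field L] [NumberField L] {v : ℕ}
    (u : Fin v → (𝓞 L)ˣ) : Prop :=
  ∀ w : (𝓞 L)ˣ, ∃! p : (𝓞 L)ˣ × (Fin v → ℤ),
    IsOfFinOrder p.1 ∧ w = p.1 * ∏ i, (u i) ^ (p.2 i)

/-! A `k`-th root of a unit of `𝓞 L` lying in `L` is a unit of `𝓞 L`, because `𝓞 L` is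
integrally closed. Writing it as `η * ∏ uᵢ ^ cᵢ`, its `k`-th power is `ηᵏ * ∏ uᵢ ^ (k cᵢ)`, so by
uniqueness of the decomposition `k` divides every exponent `aᵢ` of `t`, hence their gcd.
Capelli's criterion for prime `k` then gives irreducibility of `X ^ k - t`. -/

theorem IsIntegrallyClosed.exists_unit_pow_eq_of_pow_eq_algebraMap
    {R K : Type*} [CommRing R] [IsDomain R] [IsIntegrallyClosed R] [Field K] [Algebra R K]
    [IsFractionRing R K] {t : Rˣ} {x : K} {n : ℕ} (hn : 0 < n)
    (hx : x ^ n = algebraMap R K t) : ∃ y : Rˣ, y ^ n = t := by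
  obtain ⟨y, rfl⟩ := exists_algebraMap_eq_of_isIntegral_pow hn (hx ▸ isIntegral_algebraMap)
  have hy : y ^ n = t := IsFractionRing.injective R K (by rw [map_pow, hx])
  have hy_unit : IsUnit y := (isUnit_pow_iff hn.ne').mp (hy ▸ t.isUnit)
  exact ⟨hy_unit.unit, Units.ext hy⟩

namespace IsFundamentalSystem

variable {L : Type} [Field L] [NumberField L] {v : ℕ} {u : Fin v → (𝓞 L)ˣ}

theorem exponents_eq (hu : IsFundamentalSystem u) {ζ η : (𝓞 L)ˣ} {a c : Fin v → ℤ}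
    (hζ : IsOfFinOrder ζ) (hη : IsOfFinOrder η)
    (h : ζ * ∏ i, u i ^ a i = η * ∏ i, u i ^ c i) : a = c := by
  obtain ⟨_, _, huniq⟩ := hu (ζ * ∏ i, u i ^ a i)
  exact congrArg Prod.snd ((huniq (ζ, a) ⟨hζ, rfl⟩).trans (huniq (η, c) ⟨hη, h⟩).symm)

theorem dvd_exponents_of_pow_eq (hu : IsFundamentalSystem u) {ζ B : (𝓞 L)ˣ}
    {a : Fin v → ℤ} (hζ : IsOfFinOrder ζ) {k : ℕ} (hB : B ^ k = ζ * ∏ i, u i ^ a i) (i : Fin v) :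
    (k : ℤ) ∣ a i := by
  obtain ⟨⟨η, c⟩, ⟨hη, hBη⟩, -⟩ := hu B
  have hBk : B ^ k = η ^ k * ∏ i, u i ^ ((k : ℤ) * c i) := by
    rw [hBη, mul_pow, ← Finset.prod_pow]
    congr 1
    refine Finset.prod_congr rfl fun i _ => ?_
    rw [← zpow_natCast, ← zpow_mul, mul_comm]
  have hac := hu.exponents_eq hζ hη.pow (hB.symm.trans hBk)
  exact ⟨c i, congrFun hac i⟩

end IsFundamentalSystem

theorem irreducible_X_pow_sub_unit_general
    (L : Type) [Field L] [NumberField L] (v : ℕ) (u : Fin v → (𝓞 L)ˣ)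
    (hu : IsFundamentalSystem u)
    (t ζ : (𝓞 L)ˣ) (a : Fin v → ℤ) (hζ : IsOfFinOrder ζ)
    (ht : t = ζ * ∏ i, (u i) ^ (a i))
    (k : ℕ) (hk : k.Prime) (hdvd : ¬ ((k : ℤ) ∣ Finset.gcd Finset.univ a)) :
    Irreducible (X ^ k - C (algebraMap (𝓞 L) L (t : 𝓞 L))) := by
  refine X_pow_sub_C_irreducible_of_prime hk fun b hb => hdvd ?_
  obtain ⟨B, hB⟩ := IsIntegrallyClosed.exists_unit_pow_eq_of_pow_eq_algebraMap hk.pos hb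
  exact Finset.dvd_gcd fun i _ => hu.dvd_exponents_of_pow_eq hζ (hB.trans ht) i

theorem irreducible_X_pow_sub_unit
    (L : Type) [Field L] [NumberField L] (v : ℕ) (u : Fin v → (𝓞 L)ˣ)
    (hu : IsFundamentalSystem u)
    (t ζ : (𝓞 L)ˣ) (a : Fin v → ℤ) (hζ : IsOfFinOrder ζ)
    (ht : t = ζ * ∏ i, (u i) ^ (a i)) (hne : ∃ i, a i ≠ 0)
    (k : ℕ) (hk : k.Prime) (hdvd : ¬ ((k : ℤ) ∣ Finset.gcd Finset.univ a)) :
    Irreducible (X ^ k - C (algebraMap (𝓞 L) L (t : 𝓞 L))) :=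
  irreducible_X_pow_sub_unit_general L v u hu t ζ a hζ ht k hk hdvd
end

section
/- Let L be a number field and t a nonzero element of O_L. Suppose there exists a nonzero prime ideal P of O_L such that the valuation v_P(t) is positive. Let k be a prime number not dividing v_P(t). Then the polynomial T^k − t is irreducible over L(e^{2πi/k}). -/
open NumberField Polynomial UniqueFactorizationMonoid Classical

/-!
If `t = b ^ k` in `L`, then `b` is integral over the integrally closed ring `𝓞 L`, so `t` is a
`k`-th power in `𝓞 L` and `k` divides every exponent in the factorization of `(t)`. Hence `t` is
not a `k`-th power in `L` and, by Capelli, `X ^ k - t` is irreducible over `L`. A root of it in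
`M = L(ζₖ)` would then generate a subextension of degree `k`, which is impossible since
`[M : L] ≤ φ(k) = k - 1`.
-/

section DedekindDomain

variable {R K : Type*} [CommRing R] [IsDedekindDomain R] [Field K] [Algebra R K]
  [IsFractionRing R K] [DecidableEq (Ideal R)]

theorem dvd_count_normalizedFactors_span_pow (P : Ideal R) (c : R) (k : ℕ) :
    k ∣ Multiset.count P (normalizedFactors (Ideal.span {c ^ k})) := by
  rw [← Ideal.span_singleton_pow, normalizedFactors_pow, Multiset.count_nsmul]
  exact dvd_mul_right k _

theorem pow_ne_algebraMap_of_not_dvd_count {t : R} {P : Ideal R} {k : ℕ} (hk : 0 < k)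
    (hdvd : ¬ k ∣ Multiset.count P (normalizedFactors (Ideal.span {t}))) (b : K) :
    b ^ k ≠ algebraMap R K t := by
  intro hb
  obtain ⟨c, rfl⟩ := IsIntegrallyClosed.exists_algebraMap_eq_of_isIntegral_pow hk
    (hb ▸ isIntegral_algebraMap : IsIntegral R (b ^ k))
  rw [← map_pow, (FaithfulSMul.algebraMap_injective R K).eq_iff] at hb
  exact hdvd (hb ▸ dvd_count_normalizedFactors_span_pow P c k)

theorem irreducible_X_pow_sub_C_of_not_dvd_count {t : R} {P : Ideal R} {k : ℕ} (hk : k.Prime)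
    (hdvd : ¬ k ∣ Multiset.count P (normalizedFactors (Ideal.span {t}))) :
    Irreducible (X ^ k - C (algebraMap R K t)) :=
  X_pow_sub_C_irreducible_of_prime hk (pow_ne_algebraMap_of_not_dvd_count hk.pos hdvd)

end DedekindDomain

section FieldExtension

variable {K L : Type*} [Field K] [Field L] [Algebra K L]

theorem irreducible_map_X_pow_sub_C_of_not_dvd_finrank [FiniteDimensional K L] {p : ℕ}
    (hp : p.Prime) {a : K} (hirr : Irreducible (X ^ p - C a)) (hdvd : ¬ p ∣ Module.finrank K L) :
    Irreducible ((X ^ p - C a).map (algebraMap K L)) := by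
  rw [Polynomial.map_sub, Polynomial.map_pow, map_X, map_C]
  refine X_pow_sub_C_irreducible_of_prime hp fun b hb ↦ hdvd ?_
  have hroot : aeval b (X ^ p - C a) = 0 := by simp [hb]
  have hmin : minpoly K b = X ^ p - C a :=
    (minpoly.eq_of_irreducible_of_monic hirr hroot (monic_X_pow_sub_C _ hp.ne_zero)).symm
  simpa [hmin, natDegree_X_pow_sub_C] using
    minpoly.degree_dvd (Algebra.IsIntegral.isIntegral (R := K) b)

theorem IsCyclotomicExtension.finrank_le_totient (n : ℕ) [NeZero n]
    [IsCyclotomicExtension {n} K L] : Module.finrank K L ≤ n.totient := by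
  have hζ := IsCyclotomicExtension.zeta_spec n K L
  have hdvd : minpoly K (zeta n K L) ∣ cyclotomic n K := by
    refine minpoly.dvd K _ ?_
    rw [aeval_def, eval₂_eq_eval_map, map_cyclotomic]
    exact hζ.isRoot_cyclotomic (NeZero.pos n)
  rw [(hζ.powerBasis K).finrank, IsPrimitiveRoot.powerBasis_dim, ← natDegree_cyclotomic n K]
  exact natDegree_le_of_dvd hdvd (cyclotomic_ne_zero n K)

end FieldExtension

theorem irreducible_X_pow_sub_nonunit_over_cyclotomic_general
    (L : Type) [Field L] [NumberField L] [DecidableEq (Ideal (𝓞 L))] (t : 𝓞 L)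
    (P : Ideal (𝓞 L))
    (k : ℕ) (hk : k.Prime)
    (hdvd : ¬ k ∣ Multiset.count P (normalizedFactors (Ideal.span {t})))
    (M : Type) [Field M] [Algebra L M] [IsCyclotomicExtension {k} L M] :
    Irreducible ((X ^ k - C (algebraMap (𝓞 L) L t)).map (algebraMap L M)) := by
  have : NeZero k := ⟨hk.ne_zero⟩
  have : FiniteDimensional L M := IsCyclotomicExtension.finiteDimensional {k} L M
  have hlt : Module.finrank L M < k :=
    (IsCyclotomicExtension.finrank_le_totient k).trans_lt (Nat.totient_lt k hk.one_lt)
  exact irreducible_map_X_pow_sub_C_of_not_dvd_finrank hk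
    (irreducible_X_pow_sub_C_of_not_dvd_count hk hdvd)
    fun h ↦ (Nat.le_of_dvd Module.finrank_pos h).not_gt hlt

theorem irreducible_X_pow_sub_nonunit_over_cyclotomic
    (L : Type) [Field L] [NumberField L] [DecidableEq (Ideal (𝓞 L))] (t : 𝓞 L) (ht : t ≠ 0)
    (P : Ideal (𝓞 L)) (hP : P.IsPrime) (hP0 : P ≠ ⊥)
    (k : ℕ) (hk : k.Prime)
    (hv : 0 < Multiset.count P (normalizedFactors (Ideal.span {t})))
    (hdvd : ¬ k ∣ Multiset.count P (normalizedFactors (Ideal.span {t})))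
    (M : Type) [Field M] [Algebra L M] [IsCyclotomicExtension {k} L M] :
    Irreducible ((X ^ k - C (algebraMap (𝓞 L) L t)).map (algebraMap L M)) :=
  irreducible_X_pow_sub_nonunit_over_cyclotomic_general L t P k hk hdvd M
end
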